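/- arXiv:2509.23495 — 3 statements merged into one kernel-verified Lean document; each statement's English description precedes it below -/
import Mathlib

section
/- Let u : Ω → R^3 be differentiable with |u| ≥ 1 pointwise, κ ∈ R, Π u = u/|u|, and define the helical derivative ∂_i^h v := ∂_i v + κ (v × e_i). Then pointwise for each i = 1,2, |∂_i^h (Π u)|^2 = (1/|u|^2) |∂_i u + κ u × e_i|^2 - (1/|u|^4) |u · ∂_i u|^2 ≤ |∂_i^h u|^2. -/
/-!
Since `|Πu|` is constant, the derivative `∂ᵢ(Πu) = ∂ᵢu / |u| - (u · ∂ᵢu) u / |u|³` is the component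
of `∂ᵢu / |u|` orthogonal to `u`, and the helical term `κ (Πu × eᵢ) = κ (u × eᵢ) / |u|` is
orthogonal to `u` as well. Hence `∂ᵢʰ(Πu)` is the orthogonal projection of `∂ᵢʰu / |u|` onto `u^⊥`,
where `u · ∂ᵢʰu = u · ∂ᵢu`; Pythagoras gives the identity, and `|u| ≥ 1` the inequality.
-/

open Matrix

section
variable {E : Type*} [NormedAddCommGroup E] [NormedSpace ℝ E] {ι : Type*} [Fintype ι]

theorem HasFDerivAt.dotProduct_self {u : E → ι → ℝ} {u' : E →L[ℝ] ι → ℝ} {x : E}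
    (hu : HasFDerivAt u u' x) :
    HasFDerivAt (fun y => u y ⬝ᵥ u y)
      ((2 : ℝ) • (LinearMap.toContinuousLinearMap (dotProductBilin ℝ ℝ (u x))).comp u') x := by
  have hcoord (j : ι) : HasFDerivAt (fun y => u y j) ((ContinuousLinearMap.proj j).comp u') x :=
    (ContinuousLinearMap.proj (R := ℝ) (φ := fun _ : ι => ℝ) j).hasFDerivAt.comp x hu
  have hsum := HasFDerivAt.fun_sum (u := Finset.univ) fun j _ => (hcoord j).mul (hcoord j)
  refine hsum.congr_fderiv ?_
  ext v
  simp [dotProduct, Finset.mul_sum, two_mul]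

theorem fderiv_inv_sqrt_dotProduct_self_smul_apply {u : E → ι → ℝ} {x : E}
    (hu : DifferentiableAt ℝ u x) (hpos : 0 < u x ⬝ᵥ u x) (v : E) :
    fderiv ℝ (fun y => (√(u y ⬝ᵥ u y))⁻¹ • u y) x v =
      (√(u x ⬝ᵥ u x))⁻¹ • fderiv ℝ u x v
        - ((u x ⬝ᵥ fderiv ℝ u x v) / √(u x ⬝ᵥ u x) ^ 3) • u x := by
  set n := √(u x ⬝ᵥ u x)
  have hn : 0 < n := Real.sqrt_pos.2 hpos
  have hinvSqrt : HasDerivAt (fun t => (√t)⁻¹) (-(n ^ 2)⁻¹ * (1 / (2 * n))) (u x ⬝ᵥ u x) :=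
    (hasDerivAt_inv hn.ne').comp _ (Real.hasDerivAt_sqrt hpos.ne')
  have hscale : HasFDerivAt (fun y => (√(u y ⬝ᵥ u y))⁻¹) _ x :=
    hinvSqrt.comp_hasFDerivAt (h₂ := fun t => (√t)⁻¹) x hu.hasFDerivAt.dotProduct_self
  rw [(hscale.fun_smul hu.hasFDerivAt).fderiv]
  simp only [_root_.add_apply, _root_.smul_apply,
    ContinuousLinearMap.smulRight_apply, ContinuousLinearMap.comp_apply,
    LinearMap.coe_toContinuousLinearMap', dotProductBilin_apply_apply, smul_eq_mul]
  rw [sub_eq_add_neg, ← neg_smul]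
  congr 2
  field_simp
end

theorem dotProduct_self_inv_smul_sub_smul {ι : Type*} [Fintype ι] (w h : ι → ℝ) {n : ℝ}
    (hn : n ≠ 0) (hw : w ⬝ᵥ w = n ^ 2) :
    (n⁻¹ • h - ((w ⬝ᵥ h) / n ^ 3) • w) ⬝ᵥ (n⁻¹ • h - ((w ⬝ᵥ h) / n ^ 3) • w)
      = (1 / n ^ 2) * (h ⬝ᵥ h) - (1 / n ^ 4) * (w ⬝ᵥ h) ^ 2 := by
  simp only [sub_dotProduct, dotProduct_sub, smul_dotProduct, dotProduct_smul, smul_eq_mul, hw,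
    dotProduct_comm h w]
  field_simp
  ring

theorem stmt_6 (Ω : Set (Fin 2 → ℝ))
    (u : (Fin 2 → ℝ) → (Fin 3 → ℝ)) (κ : ℝ)
    (hu : ∀ x ∈ Ω, DifferentiableAt ℝ u x)
    (hnorm : ∀ x ∈ Ω, 1 ≤ Real.sqrt (u x ⬝ᵥ u x))
    (x : Fin 2 → ℝ) (hx : x ∈ Ω) (i : Fin 2) :
    let n : ℝ := Real.sqrt (u x ⬝ᵥ u x)
    let P : (Fin 2 → ℝ) → (Fin 3 → ℝ) := fun y => (Real.sqrt (u y ⬝ᵥ u y))⁻¹ • u y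
    let E : (Fin 3 → ℝ) := Pi.single (Fin.castLE (by norm_num) i) 1
    let du : Fin 3 → ℝ := fderiv ℝ u x (Pi.single i 1)
    let dP : Fin 3 → ℝ := fderiv ℝ P x (Pi.single i 1)
    let hP : Fin 3 → ℝ := dP + κ • crossProduct (P x) E
    let hu' : Fin 3 → ℝ := du + κ • crossProduct (u x) E
    hP ⬝ᵥ hP = (1 / n^2) * (hu' ⬝ᵥ hu') - (1 / n^4) * (u x ⬝ᵥ du)^2 ∧
      hP ⬝ᵥ hP ≤ hu' ⬝ᵥ hu' := by
  intro n P E du dP hP hu'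
  have hn : 1 ≤ n := hnorm x hx
  have hpos : 0 < u x ⬝ᵥ u x := Real.sqrt_pos.1 (one_pos.trans_le hn)
  have hdot : u x ⬝ᵥ hu' = u x ⬝ᵥ du := by
    simp only [hu', dotProduct_add, dotProduct_smul, dot_self_cross, smul_zero, add_zero]
  have hhP : hP = n⁻¹ • hu' - ((u x ⬝ᵥ hu') / n ^ 3) • u x := by
    rw [hdot]
    simp only [hP, dP, P, hu', fderiv_inv_sqrt_dotProduct_self_smul_apply (hu x hx) hpos,
      LinearMap.map_smul₂]
    module
  have hexp : hP ⬝ᵥ hP = (1 / n ^ 2) * (hu' ⬝ᵥ hu') - (1 / n ^ 4) * (u x ⬝ᵥ du) ^ 2 := by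
    rw [hhP, dotProduct_self_inv_smul_sub_smul _ _ (by positivity) (Real.sq_sqrt hpos.le).symm,
      hdot]
  refine ⟨hexp, ?_⟩
  calc hP ⬝ᵥ hP ≤ (1 / n ^ 2) * (hu' ⬝ᵥ hu') := hexp ▸ sub_le_self _ (by positivity)
    _ ≤ hu' ⬝ᵥ hu' :=
      mul_le_of_le_one_left (dotProduct_self_star_nonneg hu')
        (div_le_one_of_le₀ (one_le_pow₀ hn) (by positivity))
end

section
/- Let κ ∈ R \ {0} and let v : Ω → R^3 be a C^2 function on a connected open set Ω ⊂ R^2 satisfying ∂_i v + κ (v × e_i) = 0 for i = 1, 2. Then v = 0 on Ω. -/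
open Matrix

theorem stmt_11 (Ω : Set (Fin 2 → ℝ)) (hΩ : IsOpen Ω) (hconn : IsConnected Ω)
    (v : (Fin 2 → ℝ) → (Fin 3 → ℝ)) (κ : ℝ) (hκ : κ ≠ 0)
    (hv : ContDiffOn ℝ 2 v Ω)
    (heq : ∀ x ∈ Ω, ∀ i : Fin 2,
      fderiv ℝ v x (Pi.single i 1)
        + κ • crossProduct (v x) (Pi.single (Fin.castLE (by norm_num) i) 1) = 0) :
    ∀ x ∈ Ω, v x = 0 := by
  set E : Fin 2 → (Fin 3 → ℝ) := fun i => Pi.single (Fin.castLE (by norm_num) i) 1 with hE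
  set eI : Fin 2 → (Fin 2 → ℝ) := fun i => Pi.single i 1 with heI
  set L : Fin 2 → (Fin 3 → ℝ) →L[ℝ] (Fin 3 → ℝ) :=
    fun i => LinearMap.toContinuousLinearMap ((crossProduct (R := ℝ)).flip (E i)) with hL
  have hLapp : ∀ i u, L i u = crossProduct u (E i) := fun i u => rfl
  -- differentiability facts
  have hvd : ∀ x ∈ Ω, DifferentiableAt ℝ v x := fun x hx =>
    (hv.contDiffAt (hΩ.mem_nhds hx)).differentiableAt (by norm_num)
  have hf'cd : ContDiffOn ℝ 1 (fderiv ℝ v) Ω :=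
    hv.fderiv_of_isOpen hΩ (by norm_num)
  have hf'd : ∀ x ∈ Ω, DifferentiableAt ℝ (fderiv ℝ v) x := fun x hx =>
    ((hf'cd.contDiffAt (hΩ.mem_nhds hx)).differentiableAt (by norm_num))
  -- first-order equation rearranged
  have eq1 : ∀ x ∈ Ω, ∀ i, fderiv ℝ v x (eI i) = -(κ • (L i) (v x)) := by
    intro x hx i
    have := heq x hx i
    rw [hLapp]
    linear_combination (norm := module) this
  -- second derivative formula
  have key : ∀ x ∈ Ω, ∀ i j : Fin 2,
      fderiv ℝ (fderiv ℝ v) x (eI j) (eI i) = (κ * κ) • (L i) ((L j) (v x)) := by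
    intro x hx i j
    have hEq : (fun y => fderiv ℝ v y (eI i)) =ᶠ[nhds x]
        fun y => -(κ • (L i) (v y)) := by
      filter_upwards [hΩ.mem_nhds hx] with y hy
      exact eq1 y hy i
    have hR : HasFDerivAt (fun y => -(κ • (L i) (v y)))
        (-(κ • (L i).comp (fderiv ℝ v x))) x := by
      exact (((L i).hasFDerivAt.comp x (hvd x hx).hasFDerivAt).const_smul κ).neg
    have hLft : HasFDerivAt (fun y => fderiv ℝ v y (eI i))
        ((ContinuousLinearMap.apply ℝ (Fin 3 → ℝ) (eI i)).comp
          (fderiv ℝ (fderiv ℝ v) x)) x :=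
      (ContinuousLinearMap.apply ℝ (Fin 3 → ℝ) (eI i)).hasFDerivAt.comp x
        (hf'd x hx).hasFDerivAt
    have h1 := hLft.fderiv
    have h2 := hR.fderiv
    have h3 : ((ContinuousLinearMap.apply ℝ (Fin 3 → ℝ) (eI i)).comp
          (fderiv ℝ (fderiv ℝ v) x)) = (-(κ • (L i).comp (fderiv ℝ v x))) := by
      rw [← h1, ← h2]
      exact hEq.fderiv_eq
    have h4 := congrFun (congrArg DFunLike.coe h3) (eI j)
    simp only [ContinuousLinearMap.comp_apply, ContinuousLinearMap.apply_apply,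
      ContinuousLinearMap.neg_apply, ContinuousLinearMap.smul_apply] at h4
    rw [h4, eq1 x hx j]
    simp [smul_smul, mul_comm]
  -- symmetry of second derivative
  have symm : ∀ x ∈ Ω, (L 0) ((L 1) (v x)) = (L 1) ((L 0) (v x)) := by
    intro x hx
    have hev : ∀ᶠ y in nhds x, HasFDerivAt v (fderiv ℝ v y) y := by
      filter_upwards [hΩ.mem_nhds hx] with y hy
      exact (hvd y hy).hasFDerivAt
    have hsymm := second_derivative_symmetric_of_eventually hev
      (hf'd x hx).hasFDerivAt (eI 0) (eI 1)
    have h01 := key x hx 1 0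
    have h10 := key x hx 0 1
    rw [hsymm] at h01
    rw [h10] at h01
    have hκκ : (κ * κ) ≠ 0 := mul_ne_zero hκ hκ
    exact smul_right_injective _ hκκ h01
  -- deduce that the first two components vanish
  have hv01 : ∀ x ∈ Ω, v x 0 = 0 ∧ v x 1 = 0 := by
    intro x hx
    have h := symm x hx
    simp only [hLapp, hE, cross_apply] at h
    have h0 := congrFun h 0
    have h1 := congrFun h 1
    simp [Pi.single_apply, Fin.castLE] at h0 h1
    constructor
    · linarith
    · linarith
  -- deduce the last component vanishes
  intro x hx
  have hx0 : (fun y => v y 0) =ᶠ[nhds x] fun _ => (0 : ℝ) := by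
    filter_upwards [hΩ.mem_nhds hx] with y hy
    exact (hv01 y hy).1
  have hproj : HasFDerivAt (fun y => v y 0)
      ((ContinuousLinearMap.proj 0).comp (fderiv ℝ v x)) x :=
    (ContinuousLinearMap.proj (R := ℝ) (φ := fun _ : Fin 3 => ℝ) 0).hasFDerivAt.comp x
      (hvd x hx).hasFDerivAt
  have hz : fderiv ℝ (fun y => v y 0) x = 0 := by
    rw [hx0.fderiv_eq]
    exact fderiv_const_apply 0
  have h5 : ((ContinuousLinearMap.proj (R := ℝ) (φ := fun _ : Fin 3 => ℝ) 0).comp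
      (fderiv ℝ v x)) = 0 := by rw [← hproj.fderiv, hz]
  have h6 := congrFun (congrArg DFunLike.coe h5) (eI 1)
  simp only [ContinuousLinearMap.comp_apply, ContinuousLinearMap.proj_apply,
    ContinuousLinearMap.zero_apply] at h6
  rw [eq1 x hx 1] at h6
  simp only [hLapp, hE, cross_apply] at h6
  have hv2 : v x 2 = 0 := by
    have : -(κ * -(v x 2)) = 0 := by
      simpa [Pi.single_apply, Fin.castLE] using h6
    have h7 : κ * v x 2 = 0 := by linarith
    exact (mul_eq_zero.mp h7).resolve_left hκ
  funext j
  fin_cases j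
  · exact (hv01 x hx).1
  · exact (hv01 x hx).2
  · exact hv2
end

section
/- Let A ∈ R^{N×N} be symmetric with A_{zz'} ≤ 0 for z ≠ z' and Σ_z A_{zz'} = 0 for all z', and let v_1, ..., v_N ∈ R^3 satisfy |v_z| ≥ 1 for all z. Then the quadratic form decreases under nodal normalization: Σ_{z,z'} A_{zz'} ((v_z/|v_z|) · (v_{z'}/|v_{z'}|)) ≤ Σ_{z,z'} A_{zz'} (v_z · v_{z'}). -/
open Matrix

lemma dot_self_nonneg' (x : Fin 3 → ℝ) : 0 ≤ x ⬝ᵥ x :=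
  Finset.sum_nonneg fun i _ => mul_self_nonneg (x i)

lemma lip_aux (x y : Fin 3 → ℝ) (hx : 1 ≤ Real.sqrt (x ⬝ᵥ x))
    (hy : 1 ≤ Real.sqrt (y ⬝ᵥ y)) :
    (((Real.sqrt (x ⬝ᵥ x))⁻¹ • x - (Real.sqrt (y ⬝ᵥ y))⁻¹ • y) ⬝ᵥ
      ((Real.sqrt (x ⬝ᵥ x))⁻¹ • x - (Real.sqrt (y ⬝ᵥ y))⁻¹ • y)) ≤ (x - y) ⬝ᵥ (x - y) := by
  set a := Real.sqrt (x ⬝ᵥ x) with ha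
  set b := Real.sqrt (y ⬝ᵥ y) with hb
  have ha0 : (0:ℝ) < a := lt_of_lt_of_le one_pos hx
  have hb0 : (0:ℝ) < b := lt_of_lt_of_le one_pos hy
  have ha2 : a ^ 2 = x ⬝ᵥ x := Real.sq_sqrt (dot_self_nonneg' x)
  have hb2 : b ^ 2 = y ⬝ᵥ y := Real.sq_sqrt (dot_self_nonneg' y)
  have hcs : (x ⬝ᵥ y) ^ 2 ≤ (x ⬝ᵥ x) * (y ⬝ᵥ y) := by
    have := Finset.sum_mul_sq_le_sq_mul_sq Finset.univ x y
    simpa [dotProduct, pow_two] using this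
  simp only [sub_dotProduct, dotProduct_sub, smul_dotProduct, dotProduct_smul,
    smul_eq_mul, dotProduct_comm y x]
  rw [← ha2, ← hb2]
  have hcs' : (x ⬝ᵥ y) ^ 2 ≤ (a * b) ^ 2 := by rw [mul_pow, ha2, hb2]; exact hcs
  have hab : x ⬝ᵥ y ≤ a * b := by nlinarith [hcs', mul_pos ha0 hb0]
  have h1 : a⁻¹ * a = 1 := inv_mul_cancel₀ (ne_of_gt ha0)
  have h2 : b⁻¹ * b = 1 := inv_mul_cancel₀ (ne_of_gt hb0)
  have hab1 : 1 ≤ a * b := one_le_mul_of_one_le_of_one_le hx hy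
  have hu0 : 0 ≤ a⁻¹ * b⁻¹ := le_of_lt (mul_pos (inv_pos.2 ha0) (inv_pos.2 hb0))
  have hprod : (x ⬝ᵥ y) * (a⁻¹ * b⁻¹ * (a * b - 1)) ≤ (a * b) * (a⁻¹ * b⁻¹ * (a * b - 1)) :=
    mul_le_mul_of_nonneg_right hab (mul_nonneg hu0 (by linarith))
  nlinarith [sq_nonneg (a - b), hprod, h1, h2, mul_le_mul h1.le h2.le (by positivity) zero_le_one]

lemma quad_eq (N : ℕ) (A : Matrix (Fin N) (Fin N) ℝ)
    (hsymm : ∀ z z' : Fin N, A z z' = A z' z)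
    (hsum : ∀ z' : Fin N, ∑ z, A z z' = 0)
    (w : Fin N → Fin 3 → ℝ) :
    ∑ z, ∑ z', A z z' * (w z ⬝ᵥ w z') =
      -(1/2) * ∑ z, ∑ z', A z z' * ((w z - w z') ⬝ᵥ (w z - w z')) := by
  have hrow : ∀ z, ∑ z', A z z' = 0 := by
    intro z
    rw [show (∑ z', A z z') = ∑ z', A z' z from Finset.sum_congr rfl fun z' _ => hsymm z z']
    exact hsum z
  have expand : ∀ z z', A z z' * ((w z - w z') ⬝ᵥ (w z - w z')) =
      A z z' * (w z ⬝ᵥ w z) - 2 * (A z z' * (w z ⬝ᵥ w z')) + A z z' * (w z' ⬝ᵥ w z') := by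
    intro z z'
    rw [sub_dotProduct, dotProduct_sub, dotProduct_sub, dotProduct_comm (w z') (w z)]
    ring
  have hsplit : ∑ z, ∑ z', A z z' * ((w z - w z') ⬝ᵥ (w z - w z')) =
      (∑ z, ∑ z', A z z' * (w z ⬝ᵥ w z)) - 2 * (∑ z, ∑ z', A z z' * (w z ⬝ᵥ w z'))
        + ∑ z, ∑ z', A z z' * (w z' ⬝ᵥ w z') := by
    simp only [expand, Finset.sum_add_distrib, Finset.sum_sub_distrib, Finset.mul_sum]
  have h1 : ∑ z, ∑ z', A z z' * (w z ⬝ᵥ w z) = 0 := by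
    simp only [← Finset.sum_mul, hrow]
    simp
  have h3 : ∑ z, ∑ z', A z z' * (w z' ⬝ᵥ w z') = 0 := by
    rw [Finset.sum_comm]
    simp only [← Finset.sum_mul, hsum]
    simp
  rw [hsplit, h1, h3]
  ring

theorem stmt_14 (N : ℕ) (A : Matrix (Fin N) (Fin N) ℝ)
    (hsymm : ∀ z z' : Fin N, A z z' = A z' z)
    (hoff : ∀ z z' : Fin N, z ≠ z' → A z z' ≤ 0)
    (hsum : ∀ z' : Fin N, ∑ z, A z z' = 0)
    (v : Fin N → Fin 3 → ℝ)
    (hnorm : ∀ z, 1 ≤ Real.sqrt (v z ⬝ᵥ v z)) :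
    let n : Fin N → Fin 3 → ℝ := fun z => (Real.sqrt (v z ⬝ᵥ v z))⁻¹ • v z
    ∑ z, ∑ z', A z z' * (n z ⬝ᵥ n z') ≤ ∑ z, ∑ z', A z z' * (v z ⬝ᵥ v z') := by
  intro n
  rw [quad_eq N A hsymm hsum n, quad_eq N A hsymm hsum v]
  have h : ∑ z, ∑ z', A z z' * ((v z - v z') ⬝ᵥ (v z - v z')) ≤
      ∑ z, ∑ z', A z z' * ((n z - n z') ⬝ᵥ (n z - n z')) := by
    refine Finset.sum_le_sum fun z _ => Finset.sum_le_sum fun z' _ => ?_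
    by_cases hzz : z = z'
    · subst hzz; simp
    · exact mul_le_mul_of_nonpos_left (lip_aux (v z) (v z') (hnorm z) (hnorm z'))
        (hoff z z' hzz)
  linarith
end
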